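/- arXiv:2107.12411 — 3 statements merged into one kernel-verified Lean document; each statement's English description precedes it below -/
import Mathlib

section
/- If r* ≥ α/8 and Gonzalez's greedy selection yields centers achieving covering radius at most 2·r_{p+q}(P), then selecting a maximal (3α/4)-separated subset of these centers yields a covering of P with radius at most 2·r_{p+q}(P) + 3α/4 ≤ 8·r*, where r* = r_{p∨q,α}(P). -/
theorem exists_mem_dist_le_add_of_absorb {M ι : Type*} [PseudoMetricSpace M] {x : ι → M}
    {s : Set ι} {y : M} {r δ : ℝ} (hδ : 0 ≤ δ) (hcover : ∃ i, dist y (x i) ≤ r)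
    (habsorb : ∀ i ∉ s, ∃ j ∈ s, dist (x i) (x j) ≤ δ) :
    ∃ j ∈ s, dist y (x j) ≤ r + δ := by
  obtain ⟨i, hi⟩ := hcover
  by_cases his : i ∈ s
  · exact ⟨i, his, by linarith⟩
  · obtain ⟨j, hjs, hij⟩ := habsorb i his
    exact ⟨j, hjs, (dist_triangle y (x i) (x j)).trans (add_le_add hi hij)⟩

theorem maximal_subset_covering_bound_general
    {M : Type*} [MetricSpace M] (P : Set M)
    (α rk rstar : ℝ) (hα : 0 ≤ α)
    (hrstar_sep : α / 8 ≤ rstar) (hrstar_ge : rk ≤ rstar)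
    (k t : ℕ) (x : Fin k → M)
    (hcover : ∀ y ∈ P, ∃ i, dist y (x i) ≤ 2 * rk)
    (hmax : ∀ i : Fin k, t ≤ (i : ℕ) →
      ∃ j : Fin k, (j : ℕ) < t ∧ dist (x i) (x j) ≤ 3 * α / 4) :
    (∀ y ∈ P, ∃ j : Fin k, (j : ℕ) < t ∧ dist y (x j) ≤ 2 * rk + 3 * α / 4) ∧
      2 * rk + 3 * α / 4 ≤ 8 * rstar := by
  refine ⟨fun y hy => ?_, by linarith⟩
  exact exists_mem_dist_le_add_of_absorb (s := {j : Fin k | (j : ℕ) < t}) (by positivity)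
    (hcover y hy) fun i hi => hmax i (not_lt.mp hi)

/-- If r* ≥ α/8 and Gonzalez's greedy centers achieve covering radius at most 2·r_{p+q}(P),
then a maximal (3α/4)-separated subset of these centers covers P with radius at most
2·r_{p+q}(P) + 3α/4 ≤ 8·r*. -/
theorem maximal_subset_covering_bound
    {M : Type*} [MetricSpace M] (P : Set M) (hP : P.Finite)
    (α rk rstar : ℝ) (hα : 0 ≤ α)
    (hrk : 0 ≤ rk) (hrstar_sep : α / 8 ≤ rstar) (hrstar_ge : rk ≤ rstar)
    (k t : ℕ) (ht : t ≤ k) (x : Fin k → M) (hxP : ∀ i, x i ∈ P)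
    (hcover : ∀ y ∈ P, ∃ i, dist y (x i) ≤ 2 * rk)
    (hmax : ∀ i : Fin k, t ≤ (i : ℕ) →
      ∃ j : Fin k, (j : ℕ) < t ∧ dist (x i) (x j) ≤ 3 * α / 4) :
    (∀ y ∈ P, ∃ j : Fin k, (j : ℕ) < t ∧ dist y (x j) ≤ 2 * rk + 3 * α / 4) ∧
      2 * rk + 3 * α / 4 ≤ 8 * rstar :=
  maximal_subset_covering_bound_general P α rk rstar hα hrstar_sep hrstar_ge k t x hcover hmax
end

section
/- Color-swapping lemma: let u_{i−1} ≤ u_i ≤ u_{i+1} ≤ u_{i+2} be four centers on a line where u_{i−1}, u_{i+1} are red and u_i, u_{i+2} are blue. If the original configuration satisfies that every red-blue pair among all centers is at distance ≥ α, then after swapping the colors of u_i and u_{i+1} (making u_i red and u_{i+1} blue), every red-blue pair among these four centers is still at distance ≥ α. -/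
open Set

theorem color_swapping_general
    (α u₀ u₁ u₂ u₃ : ℝ)
    (h01 : u₀ ≤ u₁) (h12 : u₁ ≤ u₂) (h23 : u₂ ≤ u₃)
    (s01 : α ≤ |u₀ - u₁|) (s03 : α ≤ |u₀ - u₃|)
    (s21 : α ≤ |u₂ - u₁|) (s23 : α ≤ |u₂ - u₃|) :
    α ≤ |u₀ - u₂| ∧ α ≤ |u₀ - u₃| ∧ α ≤ |u₁ - u₂| ∧ α ≤ |u₁ - u₃| := by
  -- Each new red-blue pair either was an old one or encloses an old one.
  have h02 : |u₁ - u₀| ≤ |u₂ - u₀| := abs_sub_left_of_mem_uIcc (mem_uIcc_of_le h01 h12)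
  have h13 : |u₃ - u₂| ≤ |u₃ - u₁| := abs_sub_right_of_mem_uIcc (mem_uIcc_of_le h12 h23)
  rw [abs_sub_comm] at s01 s23 s21
  rw [abs_sub_comm u₀, abs_sub_comm u₁ u₃]
  exact ⟨s01.trans h02, s03, s21, s23.trans h13⟩

/-- Color-swapping lemma: for centers u₀ ≤ u₁ ≤ u₂ ≤ u₃ on a line with u₀, u₂ red and
u₁, u₃ blue, if every original red-blue pair is at distance ≥ α, then after swapping the
colors of u₁ and u₂ (so u₀, u₁ are red and u₂, u₃ are blue), every red-blue pair among
these four centers is still at distance ≥ α. -/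
theorem color_swapping
    (α u₀ u₁ u₂ u₃ : ℝ) (hα : 0 ≤ α)
    (h01 : u₀ ≤ u₁) (h12 : u₁ ≤ u₂) (h23 : u₂ ≤ u₃)
    (s01 : α ≤ |u₀ - u₁|) (s03 : α ≤ |u₀ - u₃|)
    (s21 : α ≤ |u₂ - u₁|) (s23 : α ≤ |u₂ - u₃|) :
    α ≤ |u₀ - u₂| ∧ α ≤ |u₀ - u₃| ∧ α ≤ |u₁ - u₂| ∧ α ≤ |u₁ - u₃| :=
  color_swapping_general α u₀ u₁ u₂ u₃ h01 h12 h23 s01 s03 s21 s23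
end

section
/- If x_1 < x_2 < ... < x_N are the sorted endpoints of n nonempty intervals on ℝ and H ⊂ ℝ is any finite hitting set for the intervals, then replacing each point h ∈ H by a suitable endpoint of the face (arrangement cell) containing h yields a hitting set contained in {x_1,...,x_N} of the same cardinality. -/
/-!
Among the intervals containing a point `h`, take one whose left endpoint `a j` is largest.
Then `a j ≤ h` and every interval containing `h` contains `a j` too, since its left endpoint
is at most `a j` and its right endpoint is at least `h`. Moving each point of `H` to such an
endpoint therefore loses no interval and does not increase the cardinality.
-/

open Set

section

variable {ι α : Type*} [Finite ι] [LinearOrder α] (a b : ι → α)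

theorem exists_left_endpoint_mem_Icc_of_mem {x : α} (hx : ∃ i, x ∈ Icc (a i) (b i)) :
    ∃ j, ∀ i, x ∈ Icc (a i) (b i) → a j ∈ Icc (a i) (b i) := by
  obtain ⟨i₀, hi₀⟩ := hx
  have : Nonempty {i // x ∈ Icc (a i) (b i)} := ⟨⟨i₀, hi₀⟩⟩
  obtain ⟨⟨j, hj⟩, hmax⟩ := Finite.exists_max fun i : {i // x ∈ Icc (a i) (b i)} => a i
  exact ⟨j, fun i hi => ⟨hmax ⟨i, hi⟩, hj.1.trans hi.2⟩⟩

theorem exists_map_to_left_endpoints :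
    ∃ g : α → α, (∀ x, (∃ i, x ∈ Icc (a i) (b i)) → g x ∈ range a) ∧
      ∀ x i, x ∈ Icc (a i) (b i) → g x ∈ Icc (a i) (b i) := by
  classical
  refine ⟨fun x => if hx : ∃ i, x ∈ Icc (a i) (b i) then
    a (exists_left_endpoint_mem_Icc_of_mem a b hx).choose else x, fun x hx => ?_, fun x i hi => ?_⟩
  · simp only [dif_pos hx, mem_range_self]
  · have hx : ∃ i, x ∈ Icc (a i) (b i) := ⟨i, hi⟩
    simpa only [dif_pos hx] using (exists_left_endpoint_mem_Icc_of_mem a b hx).choose_spec i hi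

end

theorem hitting_set_on_endpoints_general
    (n : ℕ) (a b : Fin n → ℝ)
    (H : Finset ℝ) (hH : ∀ i, ∃ h ∈ H, h ∈ Set.Icc (a i) (b i)) :
    ∃ H' : Finset ℝ, H'.card ≤ H.card ∧
      (↑H' : Set ℝ) ⊆ Set.range a ∪ Set.range b ∧
      ∀ i, ∃ h ∈ H', h ∈ Set.Icc (a i) (b i) := by
  classical
  obtain ⟨g, hg_range, hg_mem⟩ := exists_map_to_left_endpoints a b
  refine ⟨(H.filter fun h => ∃ i, h ∈ Icc (a i) (b i)).image g,
    Finset.card_image_le.trans (Finset.card_filter_le _ _), ?_, fun i => ?_⟩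
  · intro x hx
    simp only [Finset.coe_image, Finset.coe_filter, mem_image, mem_ofPred_eq] at hx
    obtain ⟨h, ⟨-, hh⟩, rfl⟩ := hx
    exact Or.inl (hg_range h hh)
  · obtain ⟨h, hhH, hhi⟩ := hH i
    exact ⟨g h, Finset.mem_image_of_mem g (Finset.mem_filter.mpr ⟨hhH, i, hhi⟩), hg_mem h i hhi⟩

/-- Any finite hitting set for a finite family of nonempty closed intervals can be
replaced by a hitting set of no larger cardinality consisting only of interval
endpoints. -/
theorem hitting_set_on_endpoints
    (n : ℕ) (a b : Fin n → ℝ) (hab : ∀ i, a i ≤ b i)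
    (H : Finset ℝ) (hH : ∀ i, ∃ h ∈ H, h ∈ Set.Icc (a i) (b i)) :
    ∃ H' : Finset ℝ, H'.card ≤ H.card ∧
      (↑H' : Set ℝ) ⊆ Set.range a ∪ Set.range b ∧
      ∀ i, ∃ h ∈ H', h ∈ Set.Icc (a i) (b i) :=
  hitting_set_on_endpoints_general n a b H hH
end
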